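/- arXiv:1212.5798 — 4 statements merged into one kernel-verified Lean document; each statement's English description precedes it below -/
import Mathlib

section
/- Let X be a Banach space, S : [0,∞) → B(X) with ‖S(t)‖ ≤ CM/(1+|ω|t^α) for C,M > 0, ω < 0, α ∈ (1,2), let k ∈ L¹([0,∞)), and let f : ℝ × X × X → X satisfy the Lipschitz condition ‖f(t,u,φ) - f(t,v,ψ)‖ ≤ L_f(‖u-v‖ + ‖φ-ψ‖). Define F on bounded continuous functions u : ℝ → X by (Fu)(t) = ∫_{-∞}^t S(t-s) f(s, u(s), (Ku)(s)) ds where (Ku)(t) = ∫_{-∞}^t k(t-s)u(s)ds. Then for all bounded continuous u, v: sup_t ‖(Fu)(t)-(Fv)(t)‖ ≤ Λ · sup_t ‖u(t)-v(t)‖, where Λ = CM|ω|^{-1/α}π/(α sin(π/α)) · L_f (1 + ‖k‖_{L¹}). -/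
/-!
The integrands differ by `S (t - s)` applied to `f s (u s) (Ku s) - f s (v s) (Kv s)`, whose norm
is at most `L (1 + ‖k‖₁) sup ‖u - v‖` by the Lipschitz condition and the bound
`‖Ku - Kv‖ ≤ ‖k‖₁ sup ‖u - v‖`. The decay of `S` then leaves
`∫₀^∞ (1 + |ω| x^α)⁻¹ dx = |ω|^(-1/α) π / (α sin (π / α))`, which the substitutions `x ↦ x^α` and
`y ↦ y / (1 - y)` reduce to the Beta integral `Γ(1/α) Γ(1 - 1/α) = π / sin (π / α)`.
-/

open MeasureTheory Set

theorem Real.Gamma_mul_Gamma_eq_Gamma_add_mul_integral {p q : ℝ} (hp : 0 < p) (hq : 0 < q) :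
    Real.Gamma p * Real.Gamma q =
      Real.Gamma (p + q) * ∫ x in Ioo (0:ℝ) 1, x ^ (p - 1) * (1 - x) ^ (q - 1) := by
  have h := Complex.Gamma_mul_Gamma_eq_betaIntegral (s := p) (t := q) (by simpa) (by simpa)
  have hbeta : Complex.betaIntegral p q =
      ((∫ x in Ioo (0:ℝ) 1, x ^ (p - 1) * (1 - x) ^ (q - 1) : ℝ) : ℂ) := by
    rw [Complex.betaIntegral, intervalIntegral.integral_of_le zero_le_one,
      integral_Ioc_eq_integral_Ioo, ← integral_complex_ofReal]
    refine setIntegral_congr_fun measurableSet_Ioo fun x ⟨hx0, hx1⟩ => ?_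
    push_cast
    rw [Complex.ofReal_cpow hx0.le, Complex.ofReal_cpow (sub_nonneg.mpr hx1.le)]
    push_cast
    rfl
  rw [hbeta, ← Complex.ofReal_add, Complex.Gamma_ofReal, Complex.Gamma_ofReal,
    Complex.Gamma_ofReal] at h
  exact_mod_cast h

theorem integral_Ioi_rpow_mul_one_add_rpow (p q : ℝ) :
    ∫ y in Ioi (0:ℝ), y ^ (p - 1) * (1 + y) ^ (-(p + q)) =
      ∫ x in Ioo (0:ℝ) 1, x ^ (p - 1) * (1 - x) ^ (q - 1) := by
  have himage : (fun x : ℝ => x / (1 - x)) '' Ioo 0 1 = Ioi 0 := by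
    ext y
    refine ⟨fun ⟨x, ⟨hx0, hx1⟩, hxy⟩ => hxy ▸ div_pos hx0 (sub_pos.mpr hx1), fun hy => ?_⟩
    have hy : 0 < y := hy
    refine ⟨y / (1 + y), ⟨by positivity, (div_lt_one (by positivity)).mpr (by linarith)⟩, ?_⟩
    field_simp
    ring
  have hderiv : ∀ x ∈ Ioo (0:ℝ) 1,
      HasDerivWithinAt (fun x : ℝ => x / (1 - x)) (((1 - x) ^ 2)⁻¹) (Ioo 0 1) x := by
    rintro x ⟨-, hx1⟩
    have h1x : 1 - x ≠ 0 := (sub_pos.mpr hx1).ne'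
    refine (((hasDerivAt_id' x).div ((hasDerivAt_const x 1).sub (hasDerivAt_id' x)) h1x
      ).congr_deriv ?_).hasDerivWithinAt
    simp only [Pi.sub_apply]
    field_simp
    ring
  have hinj : InjOn (fun x : ℝ => x / (1 - x)) (Ioo 0 1) := by
    rintro x ⟨-, hx1⟩ y ⟨-, hy1⟩ h
    have h1x : 1 - x ≠ 0 := (sub_pos.mpr hx1).ne'
    have h1y : 1 - y ≠ 0 := (sub_pos.mpr hy1).ne'
    field_simp at h
    linarith
  rw [← himage, integral_image_eq_integral_abs_deriv_smul measurableSet_Ioo hderiv hinj]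
  refine setIntegral_congr_fun measurableSet_Ioo fun x ⟨hx0, hx1⟩ => ?_
  have h1x : 0 < 1 - x := sub_pos.mpr hx1
  have hsum : 1 + x / (1 - x) = (1 - x)⁻¹ := by field_simp; ring
  have hsq : ((1 - x) ^ 2)⁻¹ = (1 - x) ^ (-2 : ℝ) := by
    rw [Real.rpow_neg h1x.le, Real.rpow_two]
  rw [smul_eq_mul, abs_of_pos (by positivity), hsum, hsq, Real.div_rpow hx0.le h1x.le,
    Real.inv_rpow h1x.le, ← Real.rpow_neg h1x.le, div_eq_mul_inv, ← Real.rpow_neg h1x.le]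
  calc (1 - x) ^ (-2 : ℝ) * (x ^ (p - 1) * (1 - x) ^ (-(p - 1)) * (1 - x) ^ (-(-(p + q))))
      = x ^ (p - 1) * ((1 - x) ^ (-2 : ℝ) * (1 - x) ^ (-(p - 1)) * (1 - x) ^ (-(-(p + q)))) := by
        ring
    _ = x ^ (p - 1) * (1 - x) ^ (q - 1) := by
        rw [← Real.rpow_add h1x, ← Real.rpow_add h1x]
        ring_nf

theorem integral_Ioi_rpow_mul_one_add_inv {p : ℝ} (hp0 : 0 < p) (hp1 : p < 1) :
    ∫ y in Ioi (0:ℝ), y ^ (p - 1) * (1 + y)⁻¹ = Real.pi / Real.sin (Real.pi * p) := by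
  have h := integral_Ioi_rpow_mul_one_add_rpow p (1 - p)
  have h' := Real.Gamma_mul_Gamma_eq_Gamma_add_mul_integral hp0 (sub_pos.mpr hp1)
  simp_rw [show -(p + (1 - p)) = -1 by ring, Real.rpow_neg_one] at h
  rw [add_sub_cancel, Real.Gamma_one, one_mul, Real.Gamma_mul_Gamma_one_sub] at h'
  rw [h, h']

theorem integral_Ioi_one_add_rpow_inv {a : ℝ} (ha : 1 < a) :
    ∫ x in Ioi (0:ℝ), (1 + x ^ a)⁻¹ = Real.pi / (a * Real.sin (Real.pi / a)) := by
  have ha0 : 0 < a := zero_lt_one.trans ha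
  have h := integral_comp_rpow_Ioi_of_pos
    (g := fun y : ℝ => a⁻¹ * (y ^ (a⁻¹ - 1) * (1 + y)⁻¹)) ha0
  rw [integral_const_mul, integral_Ioi_rpow_mul_one_add_inv (inv_pos.mpr ha0)
    (inv_lt_one_of_one_lt₀ ha)] at h
  calc ∫ x in Ioi (0:ℝ), (1 + x ^ a)⁻¹
      = ∫ x in Ioi (0:ℝ), (a * x ^ (a - 1)) • (a⁻¹ * ((x ^ a) ^ (a⁻¹ - 1) * (1 + x ^ a)⁻¹)) := by
        refine setIntegral_congr_fun measurableSet_Ioi fun x (hx : 0 < x) => ?_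
        have hpow : x ^ (a - 1) * (x ^ a) ^ (a⁻¹ - 1) = 1 := by
          rw [← Real.rpow_mul hx.le, ← Real.rpow_add hx, mul_sub, mul_inv_cancel₀ ha0.ne']
          simp
        calc (1 + x ^ a)⁻¹ = x ^ (a - 1) * (x ^ a) ^ (a⁻¹ - 1) * (1 + x ^ a)⁻¹ := by
              rw [hpow, one_mul]
          _ = _ := by
              rw [smul_eq_mul]
              field_simp
    _ = Real.pi / (a * Real.sin (Real.pi / a)) := by
        rw [h, ← div_eq_mul_inv]
        field_simp

theorem integral_Ioi_one_add_mul_rpow_inv {a c : ℝ} (ha : 1 < a) (hc : 0 < c) :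
    ∫ x in Ioi (0:ℝ), (1 + c * x ^ a)⁻¹ =
      c ^ (-(1 / a)) * (Real.pi / (a * Real.sin (Real.pi / a))) := by
  have hscale : 0 < c ^ (1 / a) := Real.rpow_pos_of_pos hc _
  have h := integral_comp_mul_left_Ioi (fun y : ℝ => (1 + y ^ a)⁻¹) 0 hscale
  rw [mul_zero, integral_Ioi_one_add_rpow_inv ha, smul_eq_mul, ← Real.rpow_neg hc.le] at h
  rw [← h]
  refine setIntegral_congr_fun measurableSet_Ioi fun x (hx : 0 < x) => ?_
  rw [Real.mul_rpow hscale.le hx.le, ← Real.rpow_mul hc.le, one_div_mul_cancel (by linarith),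
    Real.rpow_one]

theorem integrableOn_Ici_one_add_mul_rpow_inv {a c : ℝ} (ha : 1 < a) (hc : 0 < c) :
    IntegrableOn (fun x : ℝ => (1 + c * x ^ a)⁻¹) (Ici 0) := by
  refine Integrable.of_integral_ne_zero ?_
  have hsin : 0 < Real.sin (Real.pi / a) :=
    Real.sin_pos_of_pos_of_lt_pi (by positivity) (div_lt_self Real.pi_pos ha)
  have hscale : 0 < c ^ (-(1 / a)) := Real.rpow_pos_of_pos hc _
  rw [integral_Ici_eq_integral_Ioi, integral_Ioi_one_add_mul_rpow_inv ha hc]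
  positivity

section ChangeOfVariables

variable {E : Type*} [NormedAddCommGroup E]

theorem preimage_sub_left_Ici_zero (t : ℝ) : (fun s : ℝ => t - s) ⁻¹' Ici 0 = Iic t := by
  ext s
  simp

theorem integrableOn_Iic_comp_sub_left_iff (g : ℝ → E) (t : ℝ) :
    IntegrableOn (fun s => g (t - s)) (Iic t) ↔ IntegrableOn g (Ici 0) := by
  rw [← preimage_sub_left_Ici_zero t]
  exact (Measure.measurePreserving_sub_left volume t).integrableOn_comp_preimage
    (MeasurableEquiv.subLeft t).measurableEmbedding

theorem integral_Iic_comp_sub_left [NormedSpace ℝ E] (g : ℝ → E) (t : ℝ) :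
    ∫ s in Iic t, g (t - s) = ∫ x in Ici 0, g x := by
  rw [← preimage_sub_left_Ici_zero t]
  exact (Measure.measurePreserving_sub_left volume t).setIntegral_preimage_emb
    (MeasurableEquiv.subLeft t).measurableEmbedding g _

end ChangeOfVariables

section StronglyMeasurableApply

variable {α 𝕜 E F : Type*} [MeasurableSpace α] [NontriviallyNormedField 𝕜]
  [NormedAddCommGroup E] [NormedSpace 𝕜 E] [NormedAddCommGroup F] [NormedSpace 𝕜 F]
  {T : α → E →L[𝕜] F}

theorem MeasureTheory.SimpleFunc.stronglyMeasurable_clm_apply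
    (hT : ∀ x, StronglyMeasurable fun a => T a x) (φ : SimpleFunc α E) :
    StronglyMeasurable fun a => T a (φ a) := by
  induction φ using SimpleFunc.induction with
  | @const c s hs =>
    have heq : (fun a => T a ((SimpleFunc.piecewise s hs (SimpleFunc.const α c)
        (SimpleFunc.const α 0)) a)) = s.indicator fun a => T a c := by
      funext a
      by_cases ha : a ∈ s <;> simp [ha]
    rw [heq]
    exact (hT c).indicator hs
  | add _ hφ hψ =>
    simp only [SimpleFunc.coe_add, Pi.add_apply, ContinuousLinearMap.map_add]
    exact hφ.add hψ

theorem MeasureTheory.StronglyMeasurable.clm_apply_of_forall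
    (hT : ∀ x, StronglyMeasurable fun a => T a x) {z : α → E} (hz : StronglyMeasurable z) :
    StronglyMeasurable fun a => T a (z a) :=
  stronglyMeasurable_of_tendsto _
    (fun n => SimpleFunc.stronglyMeasurable_clm_apply hT (hz.approx n))
    (tendsto_pi_nhds.mpr fun a => ((T a).continuous.tendsto _).comp (hz.tendsto_approx a))

theorem MeasureTheory.AEStronglyMeasurable.clm_apply_of_forall
    (hT : ∀ x, StronglyMeasurable fun a => T a x) {μ : Measure α} {z : α → E}
    (hz : AEStronglyMeasurable z μ) :
    AEStronglyMeasurable (fun a => T a (z a)) μ :=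
  ⟨_, hz.stronglyMeasurable_mk.clm_apply_of_forall hT, by
    filter_upwards [hz.ae_eq_mk] with a ha
    rw [ha]⟩

end StronglyMeasurableApply

theorem norm_integral_sub_integral_le {α E : Type*} [MeasurableSpace α] [NormedAddCommGroup E]
    [NormedSpace ℝ E] {μ : Measure α} {Φ Ψ : α → E} {g : α → ℝ} (hg : Integrable g μ)
    (hΦ : AEStronglyMeasurable Φ μ) (hΨ : AEStronglyMeasurable Ψ μ)
    (hle : ∀ᵐ a ∂μ, ‖Φ a - Ψ a‖ ≤ g a) :
    ‖∫ a, Φ a ∂μ - ∫ a, Ψ a ∂μ‖ ≤ ∫ a, g a ∂μ := by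
  have hdiff : Integrable (Φ - Ψ) μ := hg.mono' (hΦ.sub hΨ) hle
  by_cases hΦi : Integrable Φ μ
  · have hΨi : Integrable Ψ μ := by simpa using hΦi.sub hdiff
    rw [← integral_sub hΦi hΨi]
    exact norm_integral_le_of_norm_le hg hle
  · -- the integrands differ by an integrable function, so both integrals are junk zeros
    have hΨi : ¬ Integrable Ψ μ := fun hΨi => hΦi (by simpa using hΨi.add hdiff)
    rw [integral_undef hΦi, integral_undef hΨi, sub_zero, norm_zero]
    exact integral_nonneg_of_ae (hle.mono fun a ha => (norm_nonneg _).trans ha)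

theorem norm_integral_Iic_clm_sub_le {E F : Type*} [NormedAddCommGroup E] [NormedSpace ℝ E]
    [NormedAddCommGroup F] [NormedSpace ℝ F] {S : ℝ → E →L[ℝ] F} {A c α δ : ℝ}
    (hc : 0 < c) (hα : 1 < α) (hS : ∀ t, 0 ≤ t → ‖S t‖ ≤ A / (1 + c * t ^ α))
    (hSmeas : ∀ x, StronglyMeasurable fun t => S t x) {z₁ z₂ : ℝ → E}
    (hz₁ : AEStronglyMeasurable z₁) (hz₂ : AEStronglyMeasurable z₂)
    (hδ : ∀ s, ‖z₁ s - z₂ s‖ ≤ δ) (t : ℝ) :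
    ‖(∫ s in Iic t, S (t - s) (z₁ s)) - ∫ s in Iic t, S (t - s) (z₂ s)‖ ≤
      A * c ^ (-(1 / α)) * (Real.pi / (α * Real.sin (Real.pi / α))) * δ := by
  have hSt : ∀ x, StronglyMeasurable fun s => S (t - s) x := fun x =>
    (hSmeas x).comp_measurable (measurable_const.sub measurable_id)
  have hbound : ∀ s ∈ Iic t,
      ‖S (t - s) (z₁ s) - S (t - s) (z₂ s)‖ ≤ (1 + c * (t - s) ^ α)⁻¹ * (A * δ) := by
    intro s (hs : s ≤ t)
    have hSts := hS (t - s) (sub_nonneg.mpr hs)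
    calc ‖S (t - s) (z₁ s) - S (t - s) (z₂ s)‖ = ‖S (t - s) (z₁ s - z₂ s)‖ := by rw [map_sub]
      _ ≤ ‖S (t - s)‖ * ‖z₁ s - z₂ s‖ := (S (t - s)).le_opNorm _
      _ ≤ A / (1 + c * (t - s) ^ α) * δ :=
          mul_le_mul hSts (hδ s) (norm_nonneg _) ((norm_nonneg _).trans hSts)
      _ = (1 + c * (t - s) ^ α)⁻¹ * (A * δ) := by ring
  calc _ ≤ ∫ s in Iic t, (1 + c * (t - s) ^ α)⁻¹ * (A * δ) :=
        norm_integral_sub_integral_le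
          ((integrableOn_Iic_comp_sub_left_iff (fun x => (1 + c * x ^ α)⁻¹ * (A * δ)) t).mpr
            ((integrableOn_Ici_one_add_mul_rpow_inv hα hc).mul_const _))
          (hz₁.clm_apply_of_forall hSt).restrict (hz₂.clm_apply_of_forall hSt).restrict
          (ae_restrict_of_forall_mem measurableSet_Iic hbound)
    _ = _ := by
        rw [integral_Iic_comp_sub_left (fun x => (1 + c * x ^ α)⁻¹ * (A * δ)),
          integral_mul_const, integral_Ici_eq_integral_Ioi, integral_Ioi_one_add_mul_rpow_inv hα hc]
        ring

noncomputable def causalConv {E : Type*} [NormedAddCommGroup E] [NormedSpace ℝ E]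
    (k : ℝ → ℝ) (w : ℝ → E) (t : ℝ) : E :=
  ∫ s in Iic t, k (t - s) • w s

section CausalConv

variable {E : Type*} [NormedAddCommGroup E] [NormedSpace ℝ E] {k : ℝ → ℝ} {w : ℝ → E} {B : ℝ}

theorem integrableOn_Iic_smul_of_norm_le (hk : IntegrableOn k (Ici 0))
    (hw : AEStronglyMeasurable w) (hB : ∀ s, ‖w s‖ ≤ B) (t : ℝ) :
    IntegrableOn (fun s => k (t - s) • w s) (Iic t) :=
  ((integrableOn_Iic_comp_sub_left_iff k t).mpr hk).smul_bdd B hw.restrict (ae_of_all _ hB)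

theorem causalConv_sub {w₁ w₂ : ℝ → E} {B₁ B₂ : ℝ} (hk : IntegrableOn k (Ici 0))
    (hw₁ : AEStronglyMeasurable w₁) (hB₁ : ∀ s, ‖w₁ s‖ ≤ B₁)
    (hw₂ : AEStronglyMeasurable w₂) (hB₂ : ∀ s, ‖w₂ s‖ ≤ B₂) (t : ℝ) :
    causalConv k w₁ t - causalConv k w₂ t = causalConv k (w₁ - w₂) t := by
  simp only [causalConv, Pi.sub_apply, smul_sub]
  exact (integral_sub (integrableOn_Iic_smul_of_norm_le hk hw₁ hB₁ t)
    (integrableOn_Iic_smul_of_norm_le hk hw₂ hB₂ t)).symm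

theorem norm_causalConv_le (hk : IntegrableOn k (Ici 0)) (hB : ∀ s, ‖w s‖ ≤ B) (t : ℝ) :
    ‖causalConv k w t‖ ≤ (∫ x in Ici 0, |k x|) * B := by
  calc ‖causalConv k w t‖ ≤ ∫ s in Iic t, ‖k (t - s) • w s‖ := norm_integral_le_integral_norm _
    _ ≤ ∫ s in Iic t, |k (t - s)| * B :=
        integral_mono_of_nonneg (ae_of_all _ fun s => norm_nonneg _)
          ((integrableOn_Iic_comp_sub_left_iff (fun x => |k x| * B) t).mpr (hk.abs.mul_const B))
          (ae_of_all _ fun s => by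
            show ‖k (t - s) • w s‖ ≤ |k (t - s)| * B
            rw [norm_smul, Real.norm_eq_abs]
            exact mul_le_mul_of_nonneg_left (hB s) (abs_nonneg _))
    _ = (∫ x in Ici 0, |k x|) * B := by
        rw [integral_Iic_comp_sub_left (fun x => |k x| * B), integral_mul_const]

theorem aestronglyMeasurable_causalConv (hk : AEStronglyMeasurable k (volume.restrict (Ici 0)))
    (hw : StronglyMeasurable w) : AEStronglyMeasurable (causalConv k w) := by
  have hrepr : causalConv k w = fun t => ∫ x in Ici 0, k x • w (t - x) := by
    funext t
    rw [causalConv, ← integral_Iic_comp_sub_left (fun x => k x • w (t - x)) t]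
    simp only [sub_sub_cancel]
  rw [hrepr]
  exact (hk.comp_snd.smul
    (hw.comp_measurable measurable_sub).aestronglyMeasurable).integral_prod_right'

end CausalConv

theorem stmt_5_general {X : Type*} [NormedAddCommGroup X] [NormedSpace ℝ X] [CompleteSpace X]
    (S : ℝ → X →L[ℝ] X) (C M ω α : ℝ) (hω : ω < 0)
    (hα1 : 1 < α)
    (hS : ∀ t : ℝ, 0 ≤ t → ‖S t‖ ≤ C * M / (1 + |ω| * t ^ α))
    (hScont : ∀ x : X, Continuous fun t => S t x)
    (k : ℝ → ℝ) (hk : IntegrableOn k (Ici 0))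
    (f : ℝ → X → X → X) (L : ℝ) (hL : 0 < L)
    (hf : Continuous fun p : ℝ × X × X => f p.1 p.2.1 p.2.2)
    (hLip : ∀ t u v φ ψ, ‖f t u φ - f t v ψ‖ ≤ L * (‖u - v‖ + ‖φ - ψ‖))
    (u v : ℝ → X) (hu : Continuous u) (hv : Continuous v)
    (Bu : ℝ) (hBu : ∀ t, ‖u t‖ ≤ Bu) (Bv : ℝ) (hBv : ∀ t, ‖v t‖ ≤ Bv)
    (Ku Kv : ℝ → X)
    (hKu : ∀ t, Ku t = ∫ s in Iic t, k (t - s) • u s)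
    (hKv : ∀ t, Kv t = ∫ s in Iic t, k (t - s) • v s)
    (t : ℝ) :
    ‖(∫ s in Iic t, S (t - s) (f s (u s) (Ku s))) -
        ∫ s in Iic t, S (t - s) (f s (v s) (Kv s))‖ ≤
      C * M * |ω| ^ (-(1/α)) * Real.pi / (α * Real.sin (Real.pi / α)) *
        (L * (1 + ∫ s in Ici (0:ℝ), |k s|)) * ⨆ s : ℝ, ‖u s - v s‖ := by
  set Ik := ∫ s in Ici (0:ℝ), |k s|
  set D := ⨆ s : ℝ, ‖u s - v s‖
  have hD : ∀ s, ‖u s - v s‖ ≤ D := le_ciSup ⟨Bu + Bv, by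
    rintro _ ⟨s, rfl⟩
    exact (norm_sub_le _ _).trans (add_le_add (hBu s) (hBv s))⟩
  obtain rfl : Ku = causalConv k u := funext hKu
  obtain rfl : Kv = causalConv k v := funext hKv
  have hK : ∀ s, ‖causalConv k u s - causalConv k v s‖ ≤ Ik * D := fun s => by
    rw [causalConv_sub hk hu.aestronglyMeasurable hBu hv.aestronglyMeasurable hBv]
    exact norm_causalConv_le hk hD s
  have hfK : ∀ s, ‖f s (u s) (causalConv k u s) - f s (v s) (causalConv k v s)‖ ≤
      L * (1 + Ik) * D := fun s =>
    calc _ ≤ L * (‖u s - v s‖ + ‖causalConv k u s - causalConv k v s‖) := hLip _ _ _ _ _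
      _ ≤ L * (D + Ik * D) := by gcongr; exacts [hD s, hK s]
      _ = L * (1 + Ik) * D := by ring
  have hmeas : ∀ w : ℝ → X, Continuous w →
      AEStronglyMeasurable fun s => f s (w s) (causalConv k w s) := fun w hw =>
    hf.comp_aestronglyMeasurable (aestronglyMeasurable_id.prodMk (hw.aestronglyMeasurable.prodMk
      (aestronglyMeasurable_causalConv hk.1 hw.stronglyMeasurable)))
  calc _ ≤ C * M * |ω| ^ (-(1 / α)) * (Real.pi / (α * Real.sin (Real.pi / α))) *
        (L * (1 + Ik) * D) :=
        norm_integral_Iic_clm_sub_le (abs_pos.mpr hω.ne) hα1 hS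
          (fun x => (hScont x).stronglyMeasurable) (hmeas u hu) (hmeas v hv) hfK t
    _ = _ := by ring

theorem stmt_5 {X : Type*} [NormedAddCommGroup X] [NormedSpace ℝ X] [CompleteSpace X]
    (S : ℝ → X →L[ℝ] X) (C M ω α : ℝ) (hC : 0 < C) (hM : 0 < M) (hω : ω < 0)
    (hα1 : 1 < α) (hα2 : α < 2)
    (hS : ∀ t : ℝ, 0 ≤ t → ‖S t‖ ≤ C * M / (1 + |ω| * t ^ α))
    (hScont : ∀ x : X, Continuous fun t => S t x)
    (k : ℝ → ℝ) (hk : IntegrableOn k (Ici 0))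
    (f : ℝ → X → X → X) (L : ℝ) (hL : 0 < L)
    (hf : Continuous fun p : ℝ × X × X => f p.1 p.2.1 p.2.2)
    (hLip : ∀ t u v φ ψ, ‖f t u φ - f t v ψ‖ ≤ L * (‖u - v‖ + ‖φ - ψ‖))
    (u v : ℝ → X) (hu : Continuous u) (hv : Continuous v)
    (Bu : ℝ) (hBu : ∀ t, ‖u t‖ ≤ Bu) (Bv : ℝ) (hBv : ∀ t, ‖v t‖ ≤ Bv)
    (Ku Kv : ℝ → X)
    (hKu : ∀ t, Ku t = ∫ s in Iic t, k (t - s) • u s)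
    (hKv : ∀ t, Kv t = ∫ s in Iic t, k (t - s) • v s)
    (t : ℝ) :
    ‖(∫ s in Iic t, S (t - s) (f s (u s) (Ku s))) -
        ∫ s in Iic t, S (t - s) (f s (v s) (Kv s))‖ ≤
      C * M * |ω| ^ (-(1/α)) * Real.pi / (α * Real.sin (Real.pi / α)) *
        (L * (1 + ∫ s in Ici (0:ℝ), |k s|)) * ⨆ s : ℝ, ‖u s - v s‖ :=
  stmt_5_general S C M ω α hω hα1 hS hScont k hk f L hL hf hLip u v hu hv Bu hBu Bv hBv Ku Kv hKu
    hKv t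
end

section
/- If f : ℝ → X is continuous with ‖f(t)‖ → 0 as t → ∞, and S : [0,∞) → B(X) is strongly continuous with ‖S(t)‖ ≤ CM/(1+|ω|t^α) for C,M > 0, ω < 0, α ∈ (1,2), then the function t ↦ ∫_0^∞ S(s) f(t-s) ds also tends to 0 in norm as t → ∞. -/
open MeasureTheory Set Filter Topology

/-! Since `‖S s‖ ≤ C M / (1 + |ω| s^α)` is integrable on `(0, ∞)` for `α > 1` and `f` is
bounded, the integrand is dominated by an integrable function of `s` alone, while for each fixed
`s` it tends to `S s 0 = 0` as `t → ∞`; dominated convergence gives the claim. -/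

lemma one_le_one_add_mul_rpow {a p s : ℝ} (ha : 0 ≤ a) (hs : 0 ≤ s) : 1 ≤ 1 + a * s ^ p :=
  le_add_of_nonneg_right (mul_nonneg ha (Real.rpow_nonneg hs p))

lemma integrableOn_Ioi_inv_one_add_mul_rpow {a p : ℝ} (ha : 0 < a) (hp : 1 < p) :
    IntegrableOn (fun s : ℝ => (1 + a * s ^ p)⁻¹) (Ioi 0) := by
  have hmeas : AEStronglyMeasurable (fun s : ℝ => (1 + a * s ^ p)⁻¹) :=
    (measurable_const.add (measurable_const.mul (measurable_id.pow_const p))).inv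
      |>.aestronglyMeasurable
  rw [← Ioc_union_Ioi_eq_Ioi zero_le_one]
  refine IntegrableOn.union ?_ ?_
  · refine Measure.integrableOn_of_bounded (M := 1) (by simp) hmeas ?_
    filter_upwards [ae_restrict_mem measurableSet_Ioc] with s hs
    have hden := one_le_one_add_mul_rpow (p := p) ha.le hs.1.le
    rw [norm_inv, Real.norm_of_nonneg (by linarith)]
    exact inv_le_one_of_one_le₀ hden
  · refine ((integrableOn_Ioi_rpow_of_lt (a := -p) (by linarith) one_pos).const_mul a⁻¹).mono'
      hmeas.restrict ?_
    filter_upwards [ae_restrict_mem measurableSet_Ioi] with s (hs : 1 < s)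
    have hsp : 0 < s ^ p := Real.rpow_pos_of_pos (by linarith) p
    rw [norm_inv, Real.norm_of_nonneg (by positivity), Real.rpow_neg (by linarith), ← mul_inv]
    exact inv_anti₀ (by positivity) (by linarith)

lemma ContinuousOn.clm_apply_of_norm_le {α E F : Type*} [TopologicalSpace α]
    [NormedAddCommGroup E] [NormedSpace ℝ E] [NormedAddCommGroup F] [NormedSpace ℝ F]
    {S : α → E →L[ℝ] F} {v : α → E} {U : Set α} {K : ℝ}
    (hS : ∀ x, Continuous fun t => S t x) (hK : ∀ t ∈ U, ‖S t‖ ≤ K)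
    (hv : ContinuousOn v U) :
    ContinuousOn (fun t => S t (v t)) U := by
  intro t₀ ht₀
  have hfixed : Tendsto (fun t => S t (v t₀)) (𝓝[U] t₀) (𝓝 (S t₀ (v t₀))) :=
    (hS (v t₀)).continuousWithinAt
  have herror : Tendsto (fun t => S t (v t - v t₀)) (𝓝[U] t₀) (𝓝 0) := by
    refine squeeze_zero_norm' (a := fun t => K * ‖v t - v t₀‖) ?_ ?_
    · filter_upwards [self_mem_nhdsWithin] with t ht
      exact (S t).le_of_opNorm_le (hK t ht) _
    · have hv₀ := (hv t₀ ht₀).sub (continuousWithinAt_const (b := v t₀))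
      simpa using (hv₀.norm.const_mul K).tendsto
  show Tendsto (fun t => S t (v t)) (𝓝[U] t₀) (𝓝 (S t₀ (v t₀)))
  simpa using hfixed.add herror

lemma tendsto_integral_apply_comp_sub_atTop {E F : Type*}
    [NormedAddCommGroup E] [NormedSpace ℝ E] [NormedAddCommGroup F] [NormedSpace ℝ F]
    {μ : Measure ℝ} {S : ℝ → E →L[ℝ] F} {f : ℝ → E} {g : ℝ → ℝ} {B : ℝ}
    (hmeas : ∀ t, AEStronglyMeasurable (fun s => S s (f (t - s))) μ)
    (hSg : ∀ᵐ s ∂μ, ‖S s‖ ≤ g s) (hg : Integrable g μ) (hfB : ∀ t, ‖f t‖ ≤ B)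
    (hf0 : Tendsto f atTop (𝓝 0)) :
    Tendsto (fun t => ∫ s, S s (f (t - s)) ∂μ) atTop (𝓝 0) := by
  have hlim : ∀ s, Tendsto (fun t => S s (f (t - s))) atTop (𝓝 0) := fun s => by
    have hshift := hf0.comp (tendsto_atTop_add_const_right _ (-s) tendsto_id)
    simpa [Function.comp_def, sub_eq_add_neg] using ((S s).continuous.tendsto 0).comp hshift
  have hbound (t : ℝ) : ∀ᵐ s ∂μ, ‖S s (f (t - s))‖ ≤ g s * B := hSg.mono fun s hs =>
    (S s).le_opNorm_of_le (hfB _) |>.trans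
      (mul_le_mul_of_nonneg_right hs ((norm_nonneg _).trans (hfB 0)))
  simpa using tendsto_integral_filter_of_dominated_convergence (fun s => g s * B)
    (.of_forall hmeas) (.of_forall hbound) (hg.mul_const B) (.of_forall hlim)

theorem stmt_13_general {X : Type*} [NormedAddCommGroup X] [NormedSpace ℝ X]
    (S : ℝ → X →L[ℝ] X) (C M ω α : ℝ) (hC : 0 < C) (hM : 0 < M) (hω : ω < 0)
    (hα1 : 1 < α)
    (hS : ∀ t : ℝ, 0 ≤ t → ‖S t‖ ≤ C * M / (1 + |ω| * t ^ α))
    (hScont : ∀ x : X, Continuous fun t => S t x)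
    (f : ℝ → X) (hf : Continuous f) (B : ℝ) (hfb : ∀ t, ‖f t‖ ≤ B)
    (hf0 : Tendsto (fun t => ‖f t‖) atTop (nhds 0)) :
    Tendsto (fun t => ‖∫ s in Ioi (0:ℝ), S s (f (t - s))‖) atTop (nhds 0) := by
  set μ := volume.restrict (Ioi (0:ℝ))
  have hSCM : ∀ s ∈ Ioi (0:ℝ), ‖S s‖ ≤ C * M := fun s hs => (hS s hs.le).trans
    (div_le_self (by positivity) (one_le_one_add_mul_rpow (abs_nonneg ω) hs.le))
  have hmeas (t : ℝ) : AEStronglyMeasurable (fun s => S s (f (t - s))) μ :=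
    (ContinuousOn.clm_apply_of_norm_le hScont hSCM (by fun_prop)).aestronglyMeasurable
      measurableSet_Ioi
  have hint : Integrable (fun s : ℝ => C * M / (1 + |ω| * s ^ α)) μ := by
    simpa only [div_eq_mul_inv] using
      (integrableOn_Ioi_inv_one_add_mul_rpow (abs_pos.mpr hω.ne) hα1).const_mul (C * M)
  have hSg : ∀ᵐ s ∂μ, ‖S s‖ ≤ C * M / (1 + |ω| * s ^ α) := by
    filter_upwards [ae_restrict_mem measurableSet_Ioi] with s hs using hS s (le_of_lt hs)
  simpa using (tendsto_integral_apply_comp_sub_atTop hmeas hSg hint hfb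
    (tendsto_zero_iff_norm_tendsto_zero.mpr hf0)).norm

theorem stmt_13 {X : Type*} [NormedAddCommGroup X] [NormedSpace ℝ X] [CompleteSpace X]
    (S : ℝ → X →L[ℝ] X) (C M ω α : ℝ) (hC : 0 < C) (hM : 0 < M) (hω : ω < 0)
    (hα1 : 1 < α) (hα2 : α < 2)
    (hS : ∀ t : ℝ, 0 ≤ t → ‖S t‖ ≤ C * M / (1 + |ω| * t ^ α))
    (hScont : ∀ x : X, Continuous fun t => S t x)
    (f : ℝ → X) (hf : Continuous f) (B : ℝ) (hfb : ∀ t, ‖f t‖ ≤ B)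
    (hf0 : Tendsto (fun t => ‖f t‖) atTop (nhds 0)) :
    Tendsto (fun t => ‖∫ s in Ioi (0:ℝ), S s (f (t - s))‖) atTop (nhds 0) :=
  stmt_13_general S C M ω α hC hM hω hα1 hS hScont f hf B hfb hf0
end

section
/- Composition theorem (Lipschitz case): let f = f₁ + f₂ where f₁ : ℝ × X → X is almost automorphic in t uniformly on compact subsets of X and f₂ : ℝ × X → X is continuous with ‖f₂(t,x)‖ → 0 as t → ∞ uniformly for x in bounded sets, and assume f satisfies a global Lipschitz condition ‖f(t,u)-f(t,v)‖ ≤ L‖u-v‖. If u : ℝ → X is asymptotically almost automorphic (u = u₁ + u₂ with u₁ almost automorphic and u₂ → 0 at ∞), then t ↦ f(t, u(t)) is asymptotically almost automorphic, with almost automorphic part t ↦ f₁(t, u₁(t)). -/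
open MeasureTheory Set Filter

/-- A bounded continuous function is almost automorphic if every real sequence admits a
subsequence along which the translates converge pointwise, with the limit translating back. -/
def AlmostAutomorphic {X : Type*} [NormedAddCommGroup X] (f : ℝ → X) : Prop :=
  Continuous f ∧ (∃ C : ℝ, ∀ t, ‖f t‖ ≤ C) ∧
  ∀ s : ℕ → ℝ, ∃ (φ : ℕ → ℕ) (g : ℝ → X), StrictMono φ ∧
    (∀ t, Filter.Tendsto (fun k => f (t + s (φ k))) Filter.atTop (nhds (g t))) ∧
    (∀ t, Filter.Tendsto (fun k => g (t - s (φ k))) Filter.atTop (nhds (f t)))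

/-- `f : ℝ × X → X` is almost automorphic in `t` uniformly for `x` in compact subsets. -/
def AlmostAutomorphicUnif {X : Type*} [NormedAddCommGroup X] (f : ℝ → X → X) : Prop :=
  Continuous (fun p : ℝ × X => f p.1 p.2) ∧
  ∀ K : Set X, IsCompact K → ∀ s : ℕ → ℝ, ∃ (φ : ℕ → ℕ) (g : ℝ → X → X), StrictMono φ ∧
    (∀ t, ∀ x ∈ K, Filter.Tendsto (fun k => f (t + s (φ k)) x) Filter.atTop (nhds (g t x))) ∧
    (∀ t, ∀ x ∈ K, Filter.Tendsto (fun k => g (t - s (φ k)) x) Filter.atTop (nhds (f t x)))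

/-!
Along a sequence `sₙ`, first extract a subsequence with `u₁ (t + sₙ) → v t` (and back), then a
further one along which `f₁ (t + sₙ, ·) → g (t, ·)` (and back) on the compact set
`K = closure (range u₁)`, which contains every `v t`. The function `f₁` inherits the Lipschitz
constant of `f`: the bound holds up to `‖f₂ (t, x) - f₂ (t, y)‖ → 0` as `t → ∞`, and almost
automorphy carries such asymptotic bounds to all `t`. The limits `g (t, ·)` are then Lipschitz on
`K` as well, so `f₁ (t + sₙ, u₁ (t + sₙ)) → g (t, v t)` and back. The remainder is bounded by
`L ‖u₂ t‖ + ‖f₂ (t, u₁ t)‖ → 0`.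
-/

open Topology

/-- `AlmostAutomorphic f` is this property together with continuity and boundedness; boundedness
is in fact implied by it (`HasAlmostAutomorphicTranslates.exists_norm_le`). -/
def HasAlmostAutomorphicTranslates {Y : Type*} [TopologicalSpace Y] (f : ℝ → Y) : Prop :=
  ∀ s : ℕ → ℝ, ∃ (φ : ℕ → ℕ) (g : ℝ → Y), StrictMono φ ∧
    (∀ t, Tendsto (fun k => f (t + s (φ k))) atTop (𝓝 (g t))) ∧
    (∀ t, Tendsto (fun k => g (t - s (φ k))) atTop (𝓝 (f t)))

theorem isSeqCompact_closure_of_forall_exists_tendsto {Y : Type*} [PseudoMetricSpace Y]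
    {s : Set Y} (h : ∀ x : ℕ → Y, (∀ n, x n ∈ s) →
      ∃ a, ∃ φ : ℕ → ℕ, StrictMono φ ∧ Tendsto (x ∘ φ) atTop (𝓝 a)) :
    IsSeqCompact (closure s) := by
  intro y hy
  choose x hxs hxy using fun n =>
    Metric.mem_closure_iff.1 (hy n) (1 / ((n : ℝ) + 1)) Nat.one_div_pos_of_nat
  obtain ⟨a, φ, hφ, ha⟩ := h x hxs
  have hya : Tendsto (y ∘ φ) atTop (𝓝 a) :=
    tendsto_of_tendsto_of_dist ha <| squeeze_zero (fun _ => dist_nonneg)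
      (fun k => (dist_comm _ _).trans_le (hxy (φ k)).le)
      (tendsto_one_div_add_atTop_nhds_zero_nat.comp hφ.tendsto_atTop)
  exact ⟨a, isClosed_closure.mem_of_tendsto hya (Eventually.of_forall fun k => hy _), φ, hφ, hya⟩

theorem tendsto_apply_of_norm_sub_le {X Y ι : Type*} [SeminormedAddCommGroup X]
    [SeminormedAddCommGroup Y] {l : Filter ι} {F : ι → X → Y} {K : Set X} {L : ℝ}
    (hF : ∀ i, ∀ x ∈ K, ∀ y ∈ K, ‖F i x - F i y‖ ≤ L * ‖x - y‖) {x : ι → X} {z : X} {w : Y}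
    (hx : ∀ i, x i ∈ K) (hz : z ∈ K) (hxz : Tendsto x l (𝓝 z))
    (hFz : Tendsto (fun i => F i z) l (𝓝 w)) :
    Tendsto (fun i => F i (x i)) l (𝓝 w) := by
  refine tendsto_of_tendsto_of_dist hFz <| squeeze_zero (fun _ => dist_nonneg)
    (g := fun i => L * dist (x i) z) (fun i => ?_) ?_
  · rw [dist_eq_norm, dist_eq_norm, norm_sub_rev]
    exact hF i _ (hx i) z hz
  · simpa using (tendsto_iff_dist_tendsto_zero.1 hxz).const_mul L

theorem tendsto_apply_zero_of_isBounded_range {X Y : Type*} [Bornology X]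
    [SeminormedAddCommGroup Y] {f : ℝ → X → Y}
    (hf : ∀ B : Set X, Bornology.IsBounded B →
      ∀ ε > (0:ℝ), ∃ T : ℝ, ∀ t ≥ T, ∀ x ∈ B, ‖f t x‖ < ε)
    {v : ℝ → X} (hv : Bornology.IsBounded (range v)) :
    Tendsto (fun t => f t (v t)) atTop (𝓝 0) := by
  refine Metric.tendsto_nhds.2 fun ε hε => ?_
  obtain ⟨T, hT⟩ := hf _ hv ε hε
  filter_upwards [eventually_ge_atTop T] with t ht
  simpa using hT t ht _ (mem_range_self t)

namespace HasAlmostAutomorphicTranslates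

theorem isCompact_closure_range {Y : Type*} [PseudoMetricSpace Y] {u : ℝ → Y}
    (hu : HasAlmostAutomorphicTranslates u) : IsCompact (closure (range u)) := by
  refine (isSeqCompact_closure_of_forall_exists_tendsto ?_).isCompact
  rintro x hx
  choose t ht using hx
  obtain ⟨φ, g, hφ, hug, -⟩ := hu t
  exact ⟨g 0, φ, hφ, by simpa [Function.comp_def, ht] using hug 0⟩

theorem isBounded_range {Y : Type*} [PseudoMetricSpace Y] {u : ℝ → Y}
    (hu : HasAlmostAutomorphicTranslates u) : Bornology.IsBounded (range u) :=
  hu.isCompact_closure_range.isBounded.subset subset_closure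

theorem exists_norm_le {Y : Type*} [SeminormedAddCommGroup Y] {u : ℝ → Y}
    (hu : HasAlmostAutomorphicTranslates u) : ∃ C, ∀ t, ‖u t‖ ≤ C := by
  simpa using isBounded_iff_forall_norm_le.1 hu.isBounded_range

theorem norm_le_of_le_add {Y : Type*} [SeminormedAddCommGroup Y] {h : ℝ → Y} {e : ℝ → ℝ}
    {c : ℝ} (hh : HasAlmostAutomorphicTranslates h) (hle : ∀ r, ‖h r‖ ≤ c + e r)
    (he : Tendsto e atTop (𝓝 0)) (t : ℝ) : ‖h t‖ ≤ c := by
  obtain ⟨φ, g, hφ, hhg, hgh⟩ := hh (fun n => n)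
  have hshift : ∀ r, Tendsto (fun k => r + (φ k : ℝ)) atTop atTop := fun r =>
    tendsto_atTop_add_const_left _ r (tendsto_natCast_atTop_atTop.comp hφ.tendsto_atTop)
  have hg : ∀ r, ‖g r‖ ≤ c := fun r =>
    le_of_tendsto_of_tendsto' (hhg r).norm (by simpa using (he.comp (hshift r)).const_add c)
      fun k => hle _
  exact le_of_tendsto' (hgh t).norm fun k => hg _

end HasAlmostAutomorphicTranslates

namespace AlmostAutomorphicUnif

variable {X : Type*} [NormedAddCommGroup X]

theorem hasAlmostAutomorphicTranslates_sub {f : ℝ → X → X} (hf : AlmostAutomorphicUnif f)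
    (x y : X) : HasAlmostAutomorphicTranslates fun t => f t x - f t y := by
  intro s
  obtain ⟨φ, g, hφ, hfg, hgf⟩ := hf.2 {x, y} (toFinite _).isCompact s
  refine ⟨φ, fun t => g t x - g t y, hφ, fun t => ?_, fun t => ?_⟩
  · exact (hfg t x (by simp)).sub (hfg t y (by simp))
  · exact (hgf t x (by simp)).sub (hgf t y (by simp))

theorem norm_sub_le_of_add_tendsto_zero {f f₁ f₂ : ℝ → X → X} {L : ℝ}
    (hf₁ : AlmostAutomorphicUnif f₁)
    (hsum : ∀ t x, f t x = f₁ t x + f₂ t x) (hf₂ : ∀ x, Tendsto (fun t => f₂ t x) atTop (𝓝 0))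
    (hLip : ∀ t u v, ‖f t u - f t v‖ ≤ L * ‖u - v‖) (t : ℝ) (x y : X) :
    ‖f₁ t x - f₁ t y‖ ≤ L * ‖x - y‖ := by
  refine (hf₁.hasAlmostAutomorphicTranslates_sub x y).norm_le_of_le_add
    (e := fun r => ‖f₂ r x - f₂ r y‖) (fun r => ?_) (by simpa using ((hf₂ x).sub (hf₂ y)).norm) t
  calc ‖f₁ r x - f₁ r y‖ = ‖(f r x - f r y) - (f₂ r x - f₂ r y)‖ := by
        rw [hsum, hsum]; abel_nf
    _ ≤ L * ‖x - y‖ + ‖f₂ r x - f₂ r y‖ := (norm_sub_le _ _).trans (by gcongr; exact hLip r x y)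

theorem hasAlmostAutomorphicTranslates_comp {f : ℝ → X → X} {u : ℝ → X} {L : ℝ}
    (hf : AlmostAutomorphicUnif f) (hLip : ∀ t x y, ‖f t x - f t y‖ ≤ L * ‖x - y‖)
    (hu : HasAlmostAutomorphicTranslates u) :
    HasAlmostAutomorphicTranslates fun t => f t (u t) := by
  intro s
  set K := closure (range u)
  have huK : ∀ t, u t ∈ K := fun t => subset_closure (mem_range_self t)
  obtain ⟨φ₁, v, hφ₁, huv, hvu⟩ := hu s
  have hvK : ∀ t, v t ∈ K := fun t =>
    isClosed_closure.mem_of_tendsto (huv t) (Eventually.of_forall fun k => huK _)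
  obtain ⟨φ₂, g, hφ₂, hfg, hgf⟩ := hf.2 K hu.isCompact_closure_range (s ∘ φ₁)
  have hgLip : ∀ r, ∀ x ∈ K, ∀ y ∈ K, ‖g r x - g r y‖ ≤ L * ‖x - y‖ := fun r x hx y hy =>
    le_of_tendsto' ((hfg r x hx).sub (hfg r y hy)).norm fun k => hLip _ _ _
  refine ⟨φ₁ ∘ φ₂, fun t => g t (v t), hφ₁.comp hφ₂, fun t => ?_, fun t => ?_⟩
  · exact tendsto_apply_of_norm_sub_le (F := fun k => f (t + s (φ₁ (φ₂ k))))
      (fun k x _ y _ => hLip _ x y) (fun k => huK _) (hvK t)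
      ((huv t).comp hφ₂.tendsto_atTop) (hfg t (v t) (hvK t))
  · exact tendsto_apply_of_norm_sub_le (fun k => hgLip _) (fun k => hvK _) (huK t)
      ((hvu t).comp hφ₂.tendsto_atTop) (hgf t (u t) (huK t))

end AlmostAutomorphicUnif

theorem stmt_15_general {X : Type*} [NormedAddCommGroup X]
    (f f₁ f₂ : ℝ → X → X) (hsum : ∀ t x, f t x = f₁ t x + f₂ t x)
    (hf₁ : AlmostAutomorphicUnif f₁)
    (hf₂c : Continuous (fun p : ℝ × X => f₂ p.1 p.2))
    (hf₂0 : ∀ B : Set X, Bornology.IsBounded B →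
      ∀ ε > (0:ℝ), ∃ T : ℝ, ∀ t ≥ T, ∀ x ∈ B, ‖f₂ t x‖ < ε)
    (L : ℝ)
    (hLip : ∀ t u v, ‖f t u - f t v‖ ≤ L * ‖u - v‖)
    (u u₁ u₂ : ℝ → X) (husum : ∀ t, u t = u₁ t + u₂ t)
    (hu₁ : AlmostAutomorphic u₁)
    (hu₂c : Continuous u₂) (hu₂0 : Tendsto (fun t => ‖u₂ t‖) atTop (nhds 0)) :
    AlmostAutomorphic (fun t => f₁ t (u₁ t)) ∧
    Continuous (fun t => f t (u t) - f₁ t (u₁ t)) ∧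
    Tendsto (fun t => ‖f t (u t) - f₁ t (u₁ t)‖) atTop (nhds 0) := by
  obtain ⟨hu₁c, -, hu₁aa : HasAlmostAutomorphicTranslates u₁⟩ := hu₁
  have hf₂pt : ∀ x, Tendsto (fun t => f₂ t x) atTop (𝓝 0) := fun x =>
    tendsto_apply_zero_of_isBounded_range hf₂0
      (Bornology.isBounded_singleton.subset range_const_subset)
  have hf₁Lip := hf₁.norm_sub_le_of_add_tendsto_zero hsum hf₂pt hLip
  have hcomp := hf₁.hasAlmostAutomorphicTranslates_comp hf₁Lip hu₁aa
  have hcont₁ : Continuous fun t => f₁ t (u₁ t) := hf₁.1.comp (continuous_id.prodMk hu₁c)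
  refine ⟨⟨hcont₁, hcomp.exists_norm_le, hcomp⟩, ?_, ?_⟩
  · have huc : Continuous u := by rw [funext husum]; exact hu₁c.add hu₂c
    simp_rw [hsum]
    exact ((hf₁.1.comp (continuous_id.prodMk huc)).add
      (hf₂c.comp (continuous_id.prodMk huc))).sub hcont₁
  · have hbound : ∀ t, ‖f t (u t) - f₁ t (u₁ t)‖ ≤ L * ‖u₂ t‖ + ‖f₂ t (u₁ t)‖ := fun t =>
      calc ‖f t (u t) - f₁ t (u₁ t)‖ = ‖(f t (u t) - f t (u₁ t)) + f₂ t (u₁ t)‖ := by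
            rw [hsum t (u₁ t)]; abel_nf
        _ ≤ L * ‖u t - u₁ t‖ + ‖f₂ t (u₁ t)‖ := (norm_add_le _ _).trans (by gcongr; exact hLip ..)
        _ = L * ‖u₂ t‖ + ‖f₂ t (u₁ t)‖ := by rw [husum, add_sub_cancel_left]
    have hf₂u₁ := tendsto_apply_zero_of_isBounded_range hf₂0 hu₁aa.isBounded_range
    exact squeeze_zero (fun t => norm_nonneg _) hbound
      (by simpa using (hu₂0.const_mul L).add hf₂u₁.norm)

theorem stmt_15 {X : Type*} [NormedAddCommGroup X] [NormedSpace ℝ X] [CompleteSpace X]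
    (f f₁ f₂ : ℝ → X → X) (hsum : ∀ t x, f t x = f₁ t x + f₂ t x)
    (hf₁ : AlmostAutomorphicUnif f₁)
    (hf₂c : Continuous (fun p : ℝ × X => f₂ p.1 p.2))
    (hf₂0 : ∀ B : Set X, Bornology.IsBounded B →
      ∀ ε > (0:ℝ), ∃ T : ℝ, ∀ t ≥ T, ∀ x ∈ B, ‖f₂ t x‖ < ε)
    (L : ℝ) (hL : 0 < L)
    (hLip : ∀ t u v, ‖f t u - f t v‖ ≤ L * ‖u - v‖)
    (u u₁ u₂ : ℝ → X) (husum : ∀ t, u t = u₁ t + u₂ t)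
    (hu₁ : AlmostAutomorphic u₁)
    (hu₂c : Continuous u₂) (hu₂0 : Tendsto (fun t => ‖u₂ t‖) atTop (nhds 0)) :
    AlmostAutomorphic (fun t => f₁ t (u₁ t)) ∧
    Continuous (fun t => f t (u t) - f₁ t (u₁ t)) ∧
    Tendsto (fun t => ‖f t (u t) - f₁ t (u₁ t)‖) atTop (nhds 0) :=
  stmt_15_general f f₁ f₂ hsum hf₁ hf₂c hf₂0 L hLip u u₁ u₂ husum hu₁ hu₂c hu₂0
end

section
/- Let S : [0,∞) → B(X) be strongly continuous with ‖S(t)‖ ≤ CM/(1+|ω|t^α), α ∈ (1,2), ω < 0. If f : ℝ → X is almost automorphic, then (Ff)(t) = ∫_{-∞}^t S(t-s) f(s) ds defines an almost automorphic function ℝ → X. -/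
open MeasureTheory Set Filter

/-! After the substitution `s = t - u`, `(Ff)(t) = ∫_{u ≥ 0} S(u) f(t - u) du`, and since
`α > 1` the bound `‖S(u)‖ ≤ CM/(1+|ω|u^α)` is an integrable majorant. Translating `t` only
translates `f` inside the integral, so continuity and both limits in the definition of almost
automorphy pass from `f` to `Ff` by dominated convergence. The limit function `g` is merely
a pointwise limit of continuous functions, but that makes it strongly measurable, which is all
the integrands need. -/

theorem StronglyMeasurable.clm_apply_of_apply {α 𝕜 E F : Type*} [MeasurableSpace α]
    [NontriviallyNormedField 𝕜] [NormedAddCommGroup E] [NormedSpace 𝕜 E]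
    [NormedAddCommGroup F] [NormedSpace 𝕜 F] {φ : α → E →L[𝕜] F} {g : α → E}
    (hφ : ∀ v, StronglyMeasurable fun a => φ a v) (hg : StronglyMeasurable g) :
    StronglyMeasurable fun a => φ a (g a) := by
  have happrox : ∀ n, StronglyMeasurable fun a => φ a (hg.approx n a) := fun n => by
    induction hg.approx n using SimpleFunc.induction' with
    | const c => exact hφ c
    | pcw hs hf₁ hf₂ =>
      simp only [SimpleFunc.coe_piecewise, Set.piecewise, apply_ite (φ _)]
      exact hf₁.piecewise hs hf₂
  exact stronglyMeasurable_of_tendsto atTop happrox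
    (tendsto_pi_nhds.2 fun a => ((φ a).continuous.tendsto _).comp (hg.tendsto_approx a))

theorem setIntegral_Iic_eq_setIntegral_Ici_sub {E : Type*} [NormedAddCommGroup E]
    [NormedSpace ℝ E] (g : ℝ → E) (t : ℝ) :
    ∫ s in Iic t, g s = ∫ u in Ici (0 : ℝ), g (t - u) := by
  have hpre : (fun u : ℝ => t - u) ⁻¹' Iic t = Ici 0 := by
    ext u
    simp
  rw [← (Measure.measurePreserving_sub_left volume t).setIntegral_preimage_emb
    (MeasurableEquiv.subLeft t).measurableEmbedding, hpre]

theorem integrableOn_Ici_one_div_one_add_mul_rpow {c α : ℝ} (hc : 0 < c) (hα : 1 < α) :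
    IntegrableOn (fun u : ℝ => 1 / (1 + c * u ^ α)) (Ici 0) := by
  have hcont : ContinuousOn (fun u : ℝ => 1 / (1 + c * u ^ α)) (Ici 0) := by
    refine continuousOn_const.div (continuousOn_const.add (continuousOn_const.mul
      (Real.continuous_rpow_const (by linarith)).continuousOn)) fun u hu => ?_
    have := Real.rpow_nonneg (mem_Ici.1 hu) α
    positivity
  have hnear : IntegrableOn (fun u : ℝ => 1 / (1 + c * u ^ α)) (Icc 0 1) :=
    (hcont.mono Icc_subset_Ici_self).integrableOn_compact isCompact_Icc
  have hdom : IntegrableOn (fun u : ℝ => c⁻¹ * u ^ (-α)) (Ioi 1) :=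
    ((integrableOn_Ioi_rpow_iff zero_lt_one).2 (neg_lt_neg hα)).const_mul c⁻¹
  have hfar : IntegrableOn (fun u : ℝ => 1 / (1 + c * u ^ α)) (Ioi 1) := by
    refine hdom.mono' ((hcont.mono fun u hu => (zero_lt_one.trans (mem_Ioi.1 hu)).le)
      |>.aestronglyMeasurable measurableSet_Ioi) ?_
    filter_upwards [ae_restrict_mem measurableSet_Ioi] with u hu
    have hu₀ : 0 < u := zero_lt_one.trans hu
    have hpow : 0 < u ^ α := Real.rpow_pos_of_pos hu₀ α
    calc ‖1 / (1 + c * u ^ α)‖ = 1 / (1 + c * u ^ α) := Real.norm_of_nonneg (by positivity)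
      _ ≤ 1 / (c * u ^ α) := one_div_le_one_div_of_le (by positivity) (by linarith)
      _ = c⁻¹ * u ^ (-α) := by rw [Real.rpow_neg hu₀.le, one_div, mul_inv]
  exact (hnear.union hfar).mono_set fun u hu =>
    (le_or_gt u 1).imp (fun h => ⟨hu, h⟩) id

section CausalConvolution

variable {X : Type*} [NormedAddCommGroup X] [NormedSpace ℝ X] {S : ℝ → X →L[ℝ] X}
  {k : ℝ → ℝ} {h : ℝ → X} {B : ℝ}

/-- The operator `F` of the paper, after the substitution `s = t - u`. -/
noncomputable def causalConvolution (S : ℝ → X →L[ℝ] X) (h : ℝ → X) (t : ℝ) : X :=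
  ∫ u in Ici (0 : ℝ), S u (h (t - u))

theorem ae_norm_apply_sub_le (hSk : ∀ u, 0 ≤ u → ‖S u‖ ≤ k u) (hB : ∀ x, ‖h x‖ ≤ B)
    (t : ℝ) :
    ∀ᵐ u ∂volume.restrict (Ici 0), ‖S u (h (t - u))‖ ≤ B * k u := by
  filter_upwards [ae_restrict_mem measurableSet_Ici] with u hu
  calc ‖S u (h (t - u))‖ ≤ ‖S u‖ * ‖h (t - u)‖ := (S u).le_opNorm _
    _ ≤ k u * B := mul_le_mul (hSk u hu) (hB _) (norm_nonneg _) ((norm_nonneg _).trans (hSk u hu))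
    _ = B * k u := mul_comm _ _

theorem norm_causalConvolution_le (hSk : ∀ u, 0 ≤ u → ‖S u‖ ≤ k u)
    (hk : IntegrableOn k (Ici 0)) (hB : ∀ x, ‖h x‖ ≤ B) (t : ℝ) :
    ‖causalConvolution S h t‖ ≤ B * ∫ u in Ici 0, k u := by
  rw [← integral_const_mul]
  exact norm_integral_le_of_norm_le (hk.const_mul B) (ae_norm_apply_sub_le hSk hB t)

theorem tendsto_causalConvolution {ι : Type*} {l : Filter ι} [l.IsCountablyGenerated]
    {h₀ : ℝ → X} {τ : ι → ℝ} {τ₀ : ℝ} (hSk : ∀ u, 0 ≤ u → ‖S u‖ ≤ k u)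
    (hk : IntegrableOn k (Ici 0)) (hS : ∀ x, Continuous fun u => S u x)
    (hh : StronglyMeasurable h) (hB : ∀ x, ‖h x‖ ≤ B)
    (hlim : ∀ u, Tendsto (fun i => h (τ i - u)) l (nhds (h₀ (τ₀ - u)))) :
    Tendsto (fun i => causalConvolution S h (τ i)) l (nhds (causalConvolution S h₀ τ₀)) :=
  tendsto_integral_filter_of_dominated_convergence (fun u => B * k u)
    (Eventually.of_forall fun _ => (StronglyMeasurable.clm_apply_of_apply
      (fun v => (hS v).stronglyMeasurable)
      (hh.comp_measurable (measurable_const.sub measurable_id))).aestronglyMeasurable)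
    (Eventually.of_forall fun i => ae_norm_apply_sub_le hSk hB (τ i)) (hk.const_mul B)
    (ae_of_all _ fun u => ((S u).continuous.tendsto _).comp (hlim u))

theorem almostAutomorphic_causalConvolution {f : ℝ → X}
    (hSk : ∀ u, 0 ≤ u → ‖S u‖ ≤ k u) (hk : IntegrableOn k (Ici 0))
    (hS : ∀ x, Continuous fun u => S u x) (hf : AlmostAutomorphic f) :
    AlmostAutomorphic (causalConvolution S f) := by
  obtain ⟨hfc, ⟨B, hB⟩, hseq⟩ := hf
  refine ⟨continuous_iff_continuousAt.2 fun t₀ => ?_,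
    ⟨_, norm_causalConvolution_le hSk hk hB⟩, fun s => ?_⟩
  · exact tendsto_causalConvolution hSk hk hS hfc.stronglyMeasurable hB fun u =>
      (hfc.comp (continuous_sub_right u)).tendsto t₀
  obtain ⟨φ, g, hφ, hfg, hgf⟩ := hseq s
  have hgB : ∀ x, ‖g x‖ ≤ B := fun x =>
    le_of_tendsto (hfg x).norm (Eventually.of_forall fun _ => hB _)
  have hg : StronglyMeasurable g := stronglyMeasurable_of_tendsto atTop
    (fun n => (hfc.comp (continuous_add_const _)).stronglyMeasurable) (tendsto_pi_nhds.2 hfg)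
  refine ⟨φ, causalConvolution S g, hφ, fun t => ?_, fun t => ?_⟩
  · exact tendsto_causalConvolution hSk hk hS hfc.stronglyMeasurable hB fun u => by
      simpa only [sub_add_eq_add_sub] using hfg (t - u)
  · exact tendsto_causalConvolution hSk hk hS hg hgB fun u =>
      (hgf (t - u)).congr fun n => congrArg g (sub_right_comm _ _ _)

end CausalConvolution

theorem stmt_16_general {X : Type*} [NormedAddCommGroup X] [NormedSpace ℝ X]
    (S : ℝ → X →L[ℝ] X) (C M ω α : ℝ) (hω : ω < 0)
    (hα1 : 1 < α)
    (hS : ∀ t : ℝ, 0 ≤ t → ‖S t‖ ≤ C * M / (1 + |ω| * t ^ α))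
    (hScont : ∀ x : X, Continuous fun t => S t x)
    (f : ℝ → X) (hf : AlmostAutomorphic f) :
    AlmostAutomorphic (fun t => ∫ s in Iic t, S (t - s) (f s)) := by
  have hk : IntegrableOn (fun u => C * M / (1 + |ω| * u ^ α)) (Ici 0) := by
    simpa only [IntegrableOn, mul_one_div] using
      (integrableOn_Ici_one_div_one_add_mul_rpow (abs_pos.2 hω.ne) hα1).const_mul (C * M)
  convert almostAutomorphic_causalConvolution hS hk hScont hf using 2 with t
  rw [setIntegral_Iic_eq_setIntegral_Ici_sub]
  simp only [sub_sub_cancel, causalConvolution]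

theorem stmt_16 {X : Type*} [NormedAddCommGroup X] [NormedSpace ℝ X] [CompleteSpace X]
    (S : ℝ → X →L[ℝ] X) (C M ω α : ℝ) (hC : 0 < C) (hM : 0 < M) (hω : ω < 0)
    (hα1 : 1 < α) (hα2 : α < 2)
    (hS : ∀ t : ℝ, 0 ≤ t → ‖S t‖ ≤ C * M / (1 + |ω| * t ^ α))
    (hScont : ∀ x : X, Continuous fun t => S t x)
    (f : ℝ → X) (hf : AlmostAutomorphic f) :
    AlmostAutomorphic (fun t => ∫ s in Iic t, S (t - s) (f s)) :=
  stmt_16_general S C M ω α hω hα1 hS hScont f hf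
end
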